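/- If S ⊆ ℤ² satisfies N_S(x) ≤ 3 for every x ∈ S, then N_S(y) ≤ 6 for every y ∉ S, and consequently the upper density of S is at most 6/11. -/

import Mathlib

open Filter

/-- `y` is a neighbor of `x` in the 8-point (Moore) neighborhood of `ℤ²`. -/
def IsNbr (x y : ℤ × ℤ) : Prop :=
  y ≠ x ∧ |y.1 - x.1| ≤ 1 ∧ |y.2 - x.2| ≤ 1

/-- `N_S(x)`: the number of neighbors of `x` lying in `S`. -/
noncomputable def nbrCount (S : Set (ℤ × ℤ)) (x : ℤ × ℤ) : ℕ :=
  Set.ncard {y ∈ S | IsNbr x y}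

/-- The box `B_r = {x : |x₁| < r, |x₂| < r}`. -/
def box (r : ℕ) : Set (ℤ × ℤ) :=
  {x | |x.1| < (r : ℤ) ∧ |x.2| < (r : ℤ)}

/-- The upper density of `S ⊆ ℤ²`: `limsup_{r → ∞} |S ∩ B_r| / (2r-1)²`. -/
noncomputable def upperDensity (S : Set (ℤ × ℤ)) : ℝ :=
  limsup (fun r : ℕ => (Set.ncard (S ∩ box r) : ℝ) / (2 * (r : ℝ) - 1) ^ 2) atTop

/-!
If a point `y` had seven neighbours in `S`, at most one of its eight neighbours would be missing
from `S`. One of the four axis-neighbours `e` of `y` then avoids it, together with the four points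
that are neighbours of both `y` and `e`; so `e ∈ S` and `N_S(e) ≥ 4`.

For the density, count the neighbouring pairs `(z, x)` with `z ∈ S ∩ B_r` and `x ∈ B_{r+1}` in two
ways: every such `z` has all `8` neighbours in `B_{r+1}`, while each `x` has at most `3` neighbours
in `S` if `x ∈ S` and at most `6` otherwise. This gives `11 |S ∩ B_r| ≤ 6 |B_{r+1}| = 6 (2r+1)²`.
-/

lemma isNbr_comm {x y : ℤ × ℤ} : IsNbr x y ↔ IsNbr y x := by
  rw [IsNbr, IsNbr, abs_sub_comm, abs_sub_comm y.2, ne_comm]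

noncomputable def nbrFinset (x : ℤ × ℤ) : Finset (ℤ × ℤ) :=
  (Finset.Icc (x.1 - 1) (x.1 + 1) ×ˢ Finset.Icc (x.2 - 1) (x.2 + 1)).erase x

section Neighbours

open Finset
open scoped Classical

lemma mem_nbrFinset {x z : ℤ × ℤ} : z ∈ nbrFinset x ↔ IsNbr x z := by
  simp only [nbrFinset, IsNbr, mem_erase, mem_product, mem_Icc, abs_le, ne_eq, Prod.ext_iff]
  constructor <;> omega

lemma card_nbrFinset (x : ℤ × ℤ) : #(nbrFinset x) = 8 := by
  rw [nbrFinset, card_erase_of_mem (by simp), card_product, Int.card_Icc, Int.card_Icc,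
    show x.1 + 1 + 1 - (x.1 - 1) = 3 by ring, show x.2 + 1 + 1 - (x.2 - 1) = 3 by ring]
  rfl

variable {S : Set (ℤ × ℤ)}

lemma nbrCount_eq_card_filter (x : ℤ × ℤ) :
    nbrCount S x = #((nbrFinset x).filter (· ∈ S)) := by
  rw [nbrCount, ← Set.ncard_coe_finset, coe_filter]
  simp only [mem_nbrFinset, and_comm]

lemma card_le_nbrCount {x : ℤ × ℤ} {A : Finset (ℤ × ℤ)} (hA : ∀ z ∈ A, z ∈ S ∧ IsNbr x z) :
    #A ≤ nbrCount S x := by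
  rw [nbrCount_eq_card_filter]
  exact card_le_card fun z hz => mem_filter.2 ⟨mem_nbrFinset.2 (hA z hz).2, (hA z hz).1⟩

lemma exists_forall_nbr_mem_of_seven_le_nbrCount {y : ℤ × ℤ} (h : 7 ≤ nbrCount S y) :
    ∃ m, ∀ z, IsNbr y z → z ≠ m → z ∈ S := by
  have hsplit := card_filter_add_card_filter_not (s := nbrFinset y) (· ∈ S)
  rw [card_nbrFinset, ← nbrCount_eq_card_filter] at hsplit
  have hmissing : #((nbrFinset y).filter (· ∉ S)) ≤ 1 := by omega
  obtain ⟨m, hm⟩ := card_le_one_iff_subset_singleton.1 hmissing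
  refine ⟨m, fun z hz hzm => by_contra fun hzS => hzm ?_⟩
  exact mem_singleton.1 (hm (mem_filter.2 ⟨mem_nbrFinset.2 hz, hzS⟩))

def axisUnits : Finset (ℤ × ℤ) := {(1, 0), (-1, 0), (0, 1), (0, -1)}

lemma exists_common_nbrs_of_mem_axisUnits (y : ℤ × ℤ) {d : ℤ × ℤ} (hd : d ∈ axisUnits) :
    IsNbr y (y + d) ∧ ∃ A : Finset (ℤ × ℤ), #A = 4 ∧ ∀ z ∈ A, IsNbr y z ∧ IsNbr (y + d) z := by
  simp only [axisUnits, mem_insert, mem_singleton] at hd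
  -- `d.swap` is a unit vector perpendicular to `d`
  refine ⟨?_, {y + d + d.swap, y + d - d.swap, y + d.swap, y - d.swap}, ?_, ?_⟩
  · rcases hd with rfl | rfl | rfl | rfl <;> simp [IsNbr, Prod.ext_iff]
  · rcases hd with rfl | rfl | rfl | rfl <;>
      rw [card_insert_of_notMem, card_insert_of_notMem, card_pair] <;>
      simp [Prod.ext_iff] <;> omega
  · simp only [mem_insert, mem_singleton]
    rcases hd with rfl | rfl | rfl | rfl <;> rintro z (rfl | rfl | rfl | rfl) <;>
      simp [IsNbr, Prod.ext_iff]

lemma exists_mem_axisUnits_avoiding (y m : ℤ × ℤ) :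
    ∃ d ∈ axisUnits, ∀ z, IsNbr y z → (z = y + d ∨ IsNbr (y + d) z) → z ≠ m := by
  obtain ⟨d, hd, hfar⟩ : ∃ d ∈ axisUnits,
      m = y ∨ 2 ≤ |m.1 - (y + d).1| ∨ 2 ≤ |m.2 - (y + d).2| := by
    -- `d` points away from `m`
    rcases lt_trichotomy m.1 y.1 with h | h | h
    · exact ⟨(1, 0), by simp [axisUnits], by simp [le_abs, Prod.ext_iff]; omega⟩
    · rcases le_or_gt m.2 y.2 with h' | h'
      · exact ⟨(0, 1), by simp [axisUnits], by simp [le_abs, Prod.ext_iff]; omega⟩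
      · exact ⟨(0, -1), by simp [axisUnits], by simp [le_abs, Prod.ext_iff]; omega⟩
    · exact ⟨(-1, 0), by simp [axisUnits], by simp [le_abs, Prod.ext_iff]; omega⟩
  refine ⟨d, hd, ?_⟩
  rintro z hz hz' rfl
  simp only [IsNbr, ne_eq, Prod.ext_iff, abs_le, le_abs] at hz hz' hfar
  omega

lemma nbrCount_le_six (h : ∀ x ∈ S, nbrCount S x ≤ 3) (y : ℤ × ℤ) :
    nbrCount S y ≤ 6 := by
  by_contra! h7
  obtain ⟨m, hm⟩ := exists_forall_nbr_mem_of_seven_le_nbrCount h7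
  obtain ⟨d, hd, hfar⟩ := exists_mem_axisUnits_avoiding y m
  obtain ⟨hye, A, hA, hAnbr⟩ := exists_common_nbrs_of_mem_axisUnits y hd
  have heS : y + d ∈ S := hm _ hye (hfar _ hye (.inl rfl))
  have hAS : ∀ z ∈ A, z ∈ S ∧ IsNbr (y + d) z := fun z hz =>
    ⟨hm z (hAnbr z hz).1 (hfar z (hAnbr z hz).1 (.inr (hAnbr z hz).2)), (hAnbr z hz).2⟩
  have h4 : 4 ≤ nbrCount S (y + d) := hA ▸ card_le_nbrCount hAS
  have := h _ heS
  omega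

lemma eight_mul_card_filter_le_sum_nbrCount {U V : Finset (ℤ × ℤ)}
    (hUV : ∀ z ∈ U, ∀ x, IsNbr z x → x ∈ V) :
    8 * #(U.filter (· ∈ S)) ≤ ∑ x ∈ V, nbrCount S x := by
  set T := U.filter (· ∈ S)
  have hT : ∀ z ∈ T, 8 ≤ #(V.bipartiteAbove IsNbr z) := fun z hz => by
    rw [← card_nbrFinset z]
    refine card_le_card fun x hx => (mem_bipartiteAbove _).2 ⟨?_, mem_nbrFinset.1 hx⟩
    exact hUV z (mem_filter.1 hz).1 x (mem_nbrFinset.1 hx)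
  calc 8 * #T = #T • 8 := by rw [smul_eq_mul, mul_comm]
    _ ≤ ∑ z ∈ T, #(V.bipartiteAbove IsNbr z) := card_nsmul_le_sum _ _ _ hT
    _ = ∑ x ∈ V, #(T.bipartiteBelow IsNbr x) := sum_card_bipartiteAbove_eq_sum_card_bipartiteBelow _
    _ ≤ ∑ x ∈ V, nbrCount S x := sum_le_sum fun x _ => card_le_nbrCount fun z hz => by
        rw [mem_bipartiteBelow, mem_filter] at hz
        exact ⟨hz.1.2, isNbr_comm.1 hz.2⟩

lemma sum_nbrCount_le (h : ∀ x ∈ S, nbrCount S x ≤ 3) (V : Finset (ℤ × ℤ)) :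
    ∑ x ∈ V, nbrCount S x ≤ 3 * #(V.filter (· ∈ S)) + 6 * #(V.filter (· ∉ S)) := by
  rw [← sum_filter_add_sum_filter_not V (· ∈ S), mul_comm 3, mul_comm 6, ← smul_eq_mul,
    ← smul_eq_mul]
  exact add_le_add (sum_le_card_nsmul _ _ _ fun x hx => h x (mem_filter.1 hx).2)
    (sum_le_card_nsmul _ _ _ fun x _ => nbrCount_le_six h x)

lemma eleven_mul_card_filter_le (h : ∀ x ∈ S, nbrCount S x ≤ 3) {U V : Finset (ℤ × ℤ)}
    (hUV : U ⊆ V) (hnbr : ∀ z ∈ U, ∀ x, IsNbr z x → x ∈ V) :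
    11 * #(U.filter (· ∈ S)) ≤ 6 * #V := by
  have hlow := eight_mul_card_filter_le_sum_nbrCount (S := S) hnbr
  have hhigh := sum_nbrCount_le h V
  have hsplit := card_filter_add_card_filter_not (s := V) (· ∈ S)
  have hmono : #(U.filter (· ∈ S)) ≤ #(V.filter (· ∈ S)) := card_le_card (filter_subset_filter _ hUV)
  omega

end Neighbours

noncomputable def boxFinset (r : ℕ) : Finset (ℤ × ℤ) :=
  Finset.Ioo (-(r : ℤ)) r ×ˢ Finset.Ioo (-(r : ℤ)) r

lemma coe_boxFinset (r : ℕ) : (boxFinset r : Set (ℤ × ℤ)) = box r := by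
  ext z
  simp [boxFinset, box, abs_lt]

lemma card_boxFinset_succ (r : ℕ) : (boxFinset (r + 1)).card = (2 * r + 1) ^ 2 := by
  rw [boxFinset, Finset.card_product, Int.card_Ioo, sq,
    show ((r + 1 : ℕ) : ℤ) - -((r + 1 : ℕ) : ℤ) - 1 = ((2 * r + 1 : ℕ) : ℤ) by push_cast; ring,
    Int.toNat_natCast]

lemma mem_box_succ_of_isNbr {r : ℕ} {z x : ℤ × ℤ} (hz : z ∈ box r) (h : IsNbr z x) :
    x ∈ box (r + 1) := by
  simp only [box, IsNbr, abs_lt, abs_le, Set.mem_ofPred_eq] at hz h ⊢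
  push_cast
  omega

lemma eleven_mul_ncard_inter_box_le {S : Set (ℤ × ℤ)} (h : ∀ x ∈ S, nbrCount S x ≤ 3) (r : ℕ) :
    11 * (S ∩ box r).ncard ≤ 6 * (2 * r + 1) ^ 2 := by
  classical
  have hbox : S ∩ box r = ↑((boxFinset r).filter (· ∈ S)) := by
    rw [Finset.coe_filter, ← coe_boxFinset]
    ext z
    simp [and_comm]
  rw [hbox, Set.ncard_coe_finset, ← card_boxFinset_succ]
  refine eleven_mul_card_filter_le h (fun z hz => ?_) fun z hz x hx => ?_ <;>
    rw [← Finset.mem_coe, coe_boxFinset] at hz ⊢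
  · simp only [box, Set.mem_ofPred_eq, abs_lt] at hz ⊢
    push_cast
    omega
  · exact mem_box_succ_of_isNbr hz hx

lemma upperDensity_le_of_ncard_inter_box_le {S : Set (ℤ × ℤ)} {c : ℝ}
    (h : ∀ r : ℕ, ((S ∩ box r).ncard : ℝ) ≤ c * (2 * r + 1) ^ 2) : upperDensity S ≤ c := by
  have hc : 0 ≤ c := by simpa using (Nat.cast_nonneg _).trans (h 0)
  have hlim : Tendsto (fun r : ℕ => c * (1 + 2 / (r : ℝ)) ^ 2) atTop (nhds c) := by
    simpa using (((tendsto_const_div_atTop_nhds_zero_nat 2).const_add 1).pow 2).const_mul c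
  have hle : ∀ᶠ r : ℕ in atTop,
      ((S ∩ box r).ncard : ℝ) / (2 * r - 1) ^ 2 ≤ c * (1 + 2 / (r : ℝ)) ^ 2 := by
    filter_upwards [eventually_ge_atTop 1] with r hr
    have hr : (1 : ℝ) ≤ r := by exact_mod_cast hr
    have hfactor : 2 * (r : ℝ) + 1 ≤ (1 + 2 / r) * (2 * r - 1) := by
      have hsmall : 2 / (r : ℝ) ≤ 2 := div_le_self zero_le_two hr
      have hexpand : (1 + 2 / (r : ℝ)) * (2 * r - 1) = 2 * r + 3 - 2 / r := by field_simp; ring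
      linarith
    rw [div_le_iff₀ (by nlinarith), mul_assoc, ← mul_pow]
    exact (h r).trans (by gcongr)
  exact (limsup_le_limsup hle (isCoboundedUnder_le_of_le atTop fun r => by positivity)
    hlim.isBoundedUnder_le).trans_eq hlim.limsup_eq

theorem degThree_outside_bound_and_density (S : Set (ℤ × ℤ))
    (h : ∀ x ∈ S, nbrCount S x ≤ 3) :
    (∀ y ∉ S, nbrCount S y ≤ 6) ∧ upperDensity S ≤ 6 / 11 := by
  refine ⟨fun y _ => nbrCount_le_six h y, upperDensity_le_of_ncard_inter_box_le fun r => ?_⟩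
  have := eleven_mul_ncard_inter_box_le h r
  rw [div_mul_eq_mul_div, le_div_iff₀ (by norm_num)]
  exact_mod_cast (by linarith : (S ∩ box r).ncard * 11 ≤ 6 * (2 * r + 1) ^ 2)
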